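/- arXiv:1910.14468 — 2 statements merged into one kernel-verified Lean document; each statement's English description precedes it below -/
import Mathlib

section
/- On Minkowski upper half space, for each real $w$, the operator $\widetilde D(\tilde u) := \tilde\nabla\big((n+2T-2)\tilde u\big) - (\tilde\Delta\tilde u)\,T$ maps homogeneous functions of degree $w$ to (vector fields with coefficients) homogeneous of degree $w-1$, and for $\tilde u$ homogeneous of degree $w$ with $w\neq -\tfrac{n-2}{2}$, one has $-\tfrac{1}{2(n+2w-2)}|\widetilde D(\tilde u)|^2 = -\tfrac{n+2w-2}{2}|\tilde\nabla\tilde u|^2 + w\,\tilde u\,\tilde\Delta\tilde u$, where all norms and operators are with respect to the flat Minkowski metric. -/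
/-!
On Minkowski upper half space, the ambient tractor-`D` operator
`D̃(ũ) = ∇̃((n + 2T - 2)ũ) - (Δ̃ũ) T` sends functions homogeneous of degree `w`
to vector fields homogeneous of degree `w - 1`, and for `w ≠ -(n-2)/2` one has,
pointwise on the null cone `{Q = 0}`,
`-(1/(2(n+2w-2))) |D̃ũ|² = -((n+2w-2)/2)|∇̃ũ|² + w ũ Δ̃ũ`.
-/

noncomputable section

abbrev Mink (n : ℕ) := (Fin (n + 1) → ℝ) × ℝ

def eX (n : ℕ) (i : Fin (n + 1)) : Mink n := (Pi.single i 1, 0)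

def eT (n : ℕ) : Mink n := (0, 1)

/-- The upper half space `{τ > 0}`. -/
def upperHalf (n : ℕ) : Set (Mink n) := {p | 0 < p.2}

/-- `Q = |x̃|² - τ̃²`. -/
def Qfun {n : ℕ} (p : Mink n) : ℝ := (∑ i, (p.1 i) ^ 2) - p.2 ^ 2

def pd {n : ℕ} (v : Mink n) (f : Mink n → ℝ) : Mink n → ℝ :=
  fun p => fderiv ℝ f p v

/-- The Minkowski Laplacian `Δ̃ = -∂_τ² + ∑ ∂_{x^i}²`. -/
def minkLap {n : ℕ} (f : Mink n → ℝ) : Mink n → ℝ :=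
  fun p => -(pd (eT n) (pd (eT n) f) p) + ∑ i, pd (eX n i) (pd (eX n i) f) p

/-- The Minkowski gradient `∇̃ f = (∂_{x^i} f, -∂_τ f)`. -/
def minkGrad {n : ℕ} (f : Mink n → ℝ) : Mink n → Mink n :=
  fun p => (fun i => pd (eX n i) f p, -(pd (eT n) f p))

/-- The Minkowski squared length `|v|² = ∑ (v^i)² - (v^τ)²`. -/
def minkNormSq {n : ℕ} (v : Mink n) : ℝ := (∑ i, (v.1 i) ^ 2) - v.2 ^ 2

/-- The Euler derivative `T f (p) = df_p(p)`. -/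
def eulerD {n : ℕ} (f : Mink n → ℝ) : Mink n → ℝ := fun p => fderiv ℝ f p p

/-- The ambient tractor-`D` operator `D̃(ũ) = ∇̃((n + 2T - 2)ũ) - (Δ̃ũ) T`,
where `T` is the Euler vector field. -/
def tractorD (n : ℕ) (u : Mink n → ℝ) : Mink n → Mink n := fun p =>
  minkGrad (fun q => ((n : ℝ) - 2) * u q + 2 * eulerD u q) p - minkLap u p • p

/-- `|∇̃ f|² = ∑ (∂_{x^i} f)² - (∂_τ f)²`. -/
def minkGradSq {n : ℕ} (f : Mink n → ℝ) : Mink n → ℝ :=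
  fun p => (∑ i, (pd (eX n i) f p) ^ 2) - (pd (eT n) f p) ^ 2


section Helpers
variable {n : ℕ}


lemma isOpen_upperHalf (n : ℕ) : IsOpen (upperHalf n) :=
  isOpen_lt continuous_const continuous_snd

lemma mem_nhds_upperHalf {p : Mink n} (hp : p ∈ upperHalf n) : upperHalf n ∈ nhds p :=
  (isOpen_upperHalf n).mem_nhds hp

lemma basis_decomp (p : Mink n) : p = (∑ i, p.1 i • eX n i) + p.2 • eT n := by
  ext j
  · simp [eX, eT, Prod.fst_sum, Finset.sum_apply, Pi.single_apply]
  · simp [eX, eT, Prod.snd_sum]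

-- euler as linear combination of pds
lemma eulerD_eq_sum (f : Mink n → ℝ) (p : Mink n) :
    eulerD f p = (∑ i, p.1 i * pd (eX n i) f p) + p.2 * pd (eT n) f p := by
  have : eulerD f p = fderiv ℝ f p ((∑ i, p.1 i • eX n i) + p.2 • eT n) := by
    rw [eulerD, ← basis_decomp]
  rw [this]
  simp [pd, map_sum]

-- contdiffat from contdiffon
lemma cda {u : Mink n → ℝ} (hu : ContDiffOn ℝ (⊤ : ℕ∞) u (upperHalf n)) {p : Mink n}
    (hp : p ∈ upperHalf n) : ContDiffAt ℝ (⊤ : ℕ∞) u p :=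
  hu.contDiffAt (mem_nhds_upperHalf hp)

lemma cda_fderiv {u : Mink n → ℝ} (hu : ContDiffOn ℝ (⊤ : ℕ∞) u (upperHalf n)) {p : Mink n}
    (hp : p ∈ upperHalf n) : ContDiffAt ℝ (⊤ : ℕ∞) (fderiv ℝ u) p :=
  (cda hu hp).fderiv_right (le_refl _)

lemma fderiv_eulerD_homog {g : Mink n → ℝ} {m : ℝ}
    (hgh : ∀ q ∈ upperHalf n, eulerD g q = m * g q)
    {p : Mink n} (hp : p ∈ upperHalf n) (hg : DifferentiableAt ℝ g p) :
    fderiv ℝ (eulerD g) p = m • fderiv ℝ g p := by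
  have hev : eulerD g =ᶠ[nhds p] fun q => m * g q :=
    Filter.eventuallyEq_of_mem (mem_nhds_upperHalf hp) hgh
  rw [hev.fderiv_eq, fderiv_const_mul hg]

lemma sndDeriv_self {g : Mink n → ℝ} (hg : ContDiffOn ℝ (⊤ : ℕ∞) g (upperHalf n)) {m : ℝ}
    (hgh : ∀ q ∈ upperHalf n, eulerD g q = m * g q)
    {p : Mink n} (hp : p ∈ upperHalf n) (v : Mink n) :
    fderiv ℝ (fderiv ℝ g) p v p = (m - 1) * fderiv ℝ g p v := by
  have hg1 : DifferentiableAt ℝ g p := (cda hg hp).differentiableAt (by simp)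
  have hg2 : DifferentiableAt ℝ (fderiv ℝ g) p :=
    (cda_fderiv hg hp).differentiableAt (by simp)
  have h2 : fderiv ℝ (eulerD g) p =
      (fderiv ℝ g p).comp (fderiv ℝ (fun q : Mink n => q) p)
        + (fderiv ℝ (fderiv ℝ g) p).flip p := by
    have he : eulerD g = fun q => (fderiv ℝ g q) q := rfl
    rw [he, fderiv_clm_apply hg2 differentiableAt_fun_id]
  have h1 := fderiv_eulerD_homog hgh hp hg1
  have := congrArg (fun L : Mink n →L[ℝ] ℝ => L v) (h1.symm.trans h2)
  simp only [ContinuousLinearMap.smul_apply, ContinuousLinearMap.add_apply,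
    ContinuousLinearMap.comp_apply, ContinuousLinearMap.flip_apply] at this
  have hid : fderiv ℝ (fun q : Mink n => q) p v = v := by
    simp [fderiv_id']
  rw [hid] at this
  have : m * fderiv ℝ g p v = fderiv ℝ g p v + fderiv ℝ (fderiv ℝ g) p v p := by
    simpa [smul_eq_mul] using this
  linarith

lemma sndDeriv_self' {g : Mink n → ℝ} (hg : ContDiffOn ℝ (⊤ : ℕ∞) g (upperHalf n)) {m : ℝ}
    (hgh : ∀ q ∈ upperHalf n, eulerD g q = m * g q)
    {p : Mink n} (hp : p ∈ upperHalf n) (v : Mink n) :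
    fderiv ℝ (fderiv ℝ g) p p v = (m - 1) * fderiv ℝ g p v := by
  have hsym : IsSymmSndFDerivAt ℝ g p :=
    (cda hg hp).isSymmSndFDerivAt
      (by rw [minSmoothness_of_isRCLikeNormedField]; exact WithTop.coe_le_coe.mpr le_top)
  rw [hsym p v]
  exact sndDeriv_self hg hgh hp v

lemma contDiffOn_pd {g : Mink n → ℝ} (hg : ContDiffOn ℝ (⊤ : ℕ∞) g (upperHalf n)) (e : Mink n) :
    ContDiffOn ℝ (⊤ : ℕ∞) (pd e g) (upperHalf n) := by
  intro p hp
  exact ((cda_fderiv hg hp).clm_apply contDiffAt_const).contDiffWithinAt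

lemma fderiv_pd {g : Mink n → ℝ} (hg : ContDiffOn ℝ (⊤ : ℕ∞) g (upperHalf n)) (e : Mink n)
    {p : Mink n} (hp : p ∈ upperHalf n) (v : Mink n) :
    fderiv ℝ (pd e g) p v = fderiv ℝ (fderiv ℝ g) p v e := by
  have hg2 : DifferentiableAt ℝ (fderiv ℝ g) p :=
    (cda_fderiv hg hp).differentiableAt (by simp)
  have he : pd e g = fun q => (fderiv ℝ g q) ((fun _ => e) q) := rfl
  rw [he, fderiv_clm_apply hg2 (differentiableAt_const e)]
  simp

lemma euler_pd {g : Mink n → ℝ} (hg : ContDiffOn ℝ (⊤ : ℕ∞) g (upperHalf n)) {m : ℝ}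
    (hgh : ∀ q ∈ upperHalf n, eulerD g q = m * g q) (e : Mink n)
    {p : Mink n} (hp : p ∈ upperHalf n) :
    eulerD (pd e g) p = (m - 1) * pd e g p := by
  have : eulerD (pd e g) p = fderiv ℝ (pd e g) p p := rfl
  rw [this, fderiv_pd hg e hp, sndDeriv_self' hg hgh hp e]
  rfl

lemma pd_euler {g : Mink n → ℝ} {m : ℝ}
    (hgh : ∀ q ∈ upperHalf n, eulerD g q = m * g q) (e : Mink n)
    {p : Mink n} (hp : p ∈ upperHalf n) (hg : DifferentiableAt ℝ g p) :
    pd e (eulerD g) p = m * pd e g p := by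
  have : pd e (eulerD g) p = fderiv ℝ (eulerD g) p e := rfl
  rw [this, fderiv_eulerD_homog hgh hp hg]
  rfl


lemma diff_pd2 {u : Mink n → ℝ} (hu : ContDiffOn ℝ (⊤ : ℕ∞) u (upperHalf n)) (e e' : Mink n)
    {p : Mink n} (hp : p ∈ upperHalf n) :
    DifferentiableAt ℝ (pd e (pd e' u)) p :=
  (cda (contDiffOn_pd (contDiffOn_pd hu e') e) hp).differentiableAt (by simp)

lemma euler_pd2 {u : Mink n → ℝ} (hu : ContDiffOn ℝ (⊤ : ℕ∞) u (upperHalf n)) {w : ℝ}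
    (hhom : ∀ q ∈ upperHalf n, eulerD u q = w * u q) (e e' : Mink n)
    {p : Mink n} (hp : p ∈ upperHalf n) :
    eulerD (pd e (pd e' u)) p = (w - 2) * pd e (pd e' u) p := by
  have h1 : ∀ q ∈ upperHalf n, eulerD (pd e' u) q = (w - 1) * pd e' u q :=
    fun q hq => euler_pd hu hhom e' hq
  have := euler_pd (contDiffOn_pd hu e') h1 e hp
  rw [this]; ring_nf

lemma euler_minkLap {u : Mink n → ℝ} (hu : ContDiffOn ℝ (⊤ : ℕ∞) u (upperHalf n)) {w : ℝ}
    (hhom : ∀ q ∈ upperHalf n, eulerD u q = w * u q)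
    {p : Mink n} (hp : p ∈ upperHalf n) :
    eulerD (minkLap u) p = (w - 2) * minkLap u p := by
  have hA : DifferentiableAt ℝ (pd (eT n) (pd (eT n) u)) p := diff_pd2 hu _ _ hp
  have hB : ∀ i : Fin (n+1), DifferentiableAt ℝ (pd (eX n i) (pd (eX n i) u)) p :=
    fun i => diff_pd2 hu _ _ hp
  have hlap : minkLap u = fun q => -(pd (eT n) (pd (eT n) u) q)
      + ∑ i, pd (eX n i) (pd (eX n i) u) q := rfl
  have hfd : fderiv ℝ (minkLap u) p = -(fderiv ℝ (pd (eT n) (pd (eT n) u)) p)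
      + ∑ i, fderiv ℝ (pd (eX n i) (pd (eX n i) u)) p := by
    rw [hlap, fderiv_fun_add (hA.fun_neg) (by exact DifferentiableAt.fun_sum fun i _ => hB i),
      fderiv_fun_neg, fderiv_fun_sum (fun i _ => hB i)]
  have : eulerD (minkLap u) p = fderiv ℝ (minkLap u) p p := rfl
  rw [this, hfd]
  simp only [ContinuousLinearMap.add_apply, ContinuousLinearMap.neg_apply,
    ContinuousLinearMap.sum_apply]
  have hT := euler_pd2 hu hhom (eT n) (eT n) hp
  have hX : ∀ i : Fin (n+1), fderiv ℝ (pd (eX n i) (pd (eX n i) u)) p p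
      = (w - 2) * pd (eX n i) (pd (eX n i) u) p := fun i => euler_pd2 hu hhom _ _ hp
  rw [show fderiv ℝ (pd (eT n) (pd (eT n) u)) p p = eulerD (pd (eT n) (pd (eT n) u)) p from rfl,
    hT, Finset.sum_congr rfl (fun i _ => hX i), minkLap, ← Finset.mul_sum]
  ring

lemma diff_minkLap {u : Mink n → ℝ} (hu : ContDiffOn ℝ (⊤ : ℕ∞) u (upperHalf n))
    {p : Mink n} (hp : p ∈ upperHalf n) : DifferentiableAt ℝ (minkLap u) p := by
  have hA : DifferentiableAt ℝ (pd (eT n) (pd (eT n) u)) p := diff_pd2 hu _ _ hp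
  have hB : ∀ i : Fin (n+1), DifferentiableAt ℝ (pd (eX n i) (pd (eX n i) u)) p :=
    fun i => diff_pd2 hu _ _ hp
  exact (hA.neg).add (DifferentiableAt.fun_sum fun i _ => hB i)

lemma diff_pd {u : Mink n → ℝ} (hu : ContDiffOn ℝ (⊤ : ℕ∞) u (upperHalf n)) (e : Mink n)
    {p : Mink n} (hp : p ∈ upperHalf n) : DifferentiableAt ℝ (pd e u) p :=
  (cda (contDiffOn_pd hu e) hp).differentiableAt (by simp)

lemma euler_component {u : Mink n → ℝ} (hu : ContDiffOn ℝ (⊤ : ℕ∞) u (upperHalf n)) {w : ℝ}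
    (hhom : ∀ q ∈ upperHalf n, eulerD u q = w * u q) (e : Mink n)
    (coord : Mink n →L[ℝ] ℝ) {p : Mink n} (hp : p ∈ upperHalf n) (c : ℝ) :
    eulerD (fun q => c * pd e u q - minkLap u q * coord q) p
      = (w - 1) * (c * pd e u p - minkLap u p * coord p) := by
  have hpd : DifferentiableAt ℝ (pd e u) p := diff_pd hu e hp
  have hL : DifferentiableAt ℝ (minkLap u) p := diff_minkLap hu hp
  have hcoord : DifferentiableAt ℝ (fun q : Mink n => coord q) p := coord.differentiableAt
  have h0 : eulerD (fun q => c * pd e u q - minkLap u q * coord q) p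
      = fderiv ℝ (fun q => c * pd e u q - minkLap u q * coord q) p p := rfl
  rw [h0, fderiv_fun_sub (hpd.const_mul c) (hL.fun_mul hcoord), fderiv_const_mul hpd,
    fderiv_fun_mul hL hcoord]
  simp only [ContinuousLinearMap.sub_apply, ContinuousLinearMap.add_apply,
    ContinuousLinearMap.smul_apply, smul_eq_mul]
  have h1 : fderiv ℝ (pd e u) p p = (w - 1) * pd e u p := euler_pd hu hhom e hp
  have h2 : fderiv ℝ (fun q : Mink n => coord q) p p = coord p := by
    rw [coord.fderiv]
  have h3 : fderiv ℝ (minkLap u) p p = (w - 2) * minkLap u p := euler_minkLap hu hhom hp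
  rw [h1, h2, h3]
  ring


lemma diff_eulerD {u : Mink n → ℝ} (hu : ContDiffOn ℝ (⊤ : ℕ∞) u (upperHalf n))
    {p : Mink n} (hp : p ∈ upperHalf n) : DifferentiableAt ℝ (eulerD u) p := by
  have : eulerD u = fun r => (fderiv ℝ u r) r := rfl
  rw [this]
  exact ((cda_fderiv hu hp).differentiableAt (by simp)).clm_apply differentiableAt_fun_id

lemma pd_f {u : Mink n → ℝ} (hu : ContDiffOn ℝ (⊤ : ℕ∞) u (upperHalf n)) {w : ℝ}
    (hhom : ∀ q ∈ upperHalf n, eulerD u q = w * u q) (e : Mink n)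
    {q : Mink n} (hq : q ∈ upperHalf n) :
    pd e (fun r => ((n : ℝ) - 2) * u r + 2 * eulerD u r) q
      = ((n : ℝ) + 2 * w - 2) * pd e u q := by
  have hdu : DifferentiableAt ℝ u q := (cda hu hq).differentiableAt (by simp)
  have hde : DifferentiableAt ℝ (eulerD u) q := diff_eulerD hu hq
  have h0 : pd e (fun r => ((n : ℝ) - 2) * u r + 2 * eulerD u r) q
      = fderiv ℝ (fun r => ((n : ℝ) - 2) * u r + 2 * eulerD u r) q e := rfl
  rw [h0, fderiv_fun_add (hdu.const_mul _) (hde.const_mul _), fderiv_const_mul hdu,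
    fderiv_const_mul hde]
  simp only [ContinuousLinearMap.add_apply, ContinuousLinearMap.smul_apply, smul_eq_mul]
  have h1 : fderiv ℝ (eulerD u) q e = w * fderiv ℝ u q e :=
    pd_euler hhom e hq hdu
  rw [h1]
  show ((n:ℝ) - 2) * fderiv ℝ u q e + 2 * (w * fderiv ℝ u q e)
      = ((n:ℝ) + 2*w - 2) * fderiv ℝ u q e
  ring

lemma tractor_fst {u : Mink n → ℝ} (hu : ContDiffOn ℝ (⊤ : ℕ∞) u (upperHalf n)) {w : ℝ}
    (hhom : ∀ q ∈ upperHalf n, eulerD u q = w * u q)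
    {p : Mink n} (hp : p ∈ upperHalf n) (i : Fin (n + 1)) :
    (tractorD n u p).1 i
      = ((n : ℝ) + 2 * w - 2) * pd (eX n i) u p - minkLap u p * p.1 i := by
  have h := pd_f hu hhom (eX n i) hp
  simp [tractorD, minkGrad, h, smul_eq_mul]

lemma tractor_snd {u : Mink n → ℝ} (hu : ContDiffOn ℝ (⊤ : ℕ∞) u (upperHalf n)) {w : ℝ}
    (hhom : ∀ q ∈ upperHalf n, eulerD u q = w * u q)
    {p : Mink n} (hp : p ∈ upperHalf n) :
    (tractorD n u p).2
      = -(((n : ℝ) + 2 * w - 2) * pd (eT n) u p) - minkLap u p * p.2 := by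
  have h := pd_f hu hhom (eT n) hp
  simp [tractorD, minkGrad, h, smul_eq_mul]

lemma part1 {u : Mink n → ℝ} (hu : ContDiffOn ℝ (⊤ : ℕ∞) u (upperHalf n)) {w : ℝ}
    (hhom : ∀ q ∈ upperHalf n, eulerD u q = w * u q)
    {p : Mink n} (hp : p ∈ upperHalf n) :
    fderiv ℝ (tractorD n u) p p = (w - 1) • tractorD n u p := by
  set c : ℝ := (n : ℝ) + 2 * w - 2 with hcdef
  let coordF : Fin (n+1) → (Mink n →L[ℝ] ℝ) := fun i =>
    (ContinuousLinearMap.proj i).comp (ContinuousLinearMap.fst ℝ (Fin (n+1) → ℝ) ℝ)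
  let coordS : Mink n →L[ℝ] ℝ := ContinuousLinearMap.snd ℝ (Fin (n+1) → ℝ) ℝ
  let A : Fin (n+1) → Mink n → ℝ := fun i q => c * pd (eX n i) u q - minkLap u q * coordF i q
  let B : Mink n → ℝ := fun q => (-c) * pd (eT n) u q - minkLap u q * coordS q
  have hcF : ∀ i (q : Mink n), coordF i q = q.1 i := fun i q => rfl
  have hcS : ∀ q : Mink n, coordS q = q.2 := fun q => rfl
  have hAq : ∀ q ∈ upperHalf n, tractorD n u q = (fun i => A i q, B q) := by
    intro q hq
    have h1 := tractor_fst hu hhom hq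
    have h2 := tractor_snd hu hhom hq
    ext j
    · rw [h1 j]; simp only [A, hcF, hcdef]
    · rw [h2]; simp only [B, hcS]; ring
  have hev : tractorD n u =ᶠ[nhds p] fun q => (fun i => A i q, B q) :=
    Filter.eventuallyEq_of_mem (mem_nhds_upperHalf hp) hAq
  have hdA : ∀ i, DifferentiableAt ℝ (A i) p := fun i =>
    ((diff_pd hu _ hp).const_mul c).sub
      ((diff_minkLap hu hp).mul (coordF i).differentiableAt)
  have hdB : DifferentiableAt ℝ B p :=
    ((diff_pd hu _ hp).const_mul (-c)).sub
      ((diff_minkLap hu hp).mul coordS.differentiableAt)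
  rw [hev.fderiv_eq, DifferentiableAt.fderiv_prodMk (differentiableAt_pi.mpr hdA) hdB]
  have heA : ∀ i, fderiv ℝ (A i) p p = (w - 1) * A i p := fun i =>
    euler_component hu hhom (eX n i) (coordF i) hp c
  have heB : fderiv ℝ B p p = (w - 1) * B p :=
    euler_component hu hhom (eT n) coordS hp (-c)
  ext j
  · rw [ContinuousLinearMap.prod_apply]
    show fderiv ℝ (fun q i => A i q) p p j = ((w - 1) • tractorD n u p).1 j
    rw [fderiv_pi hdA]
    rw [hAq p hp]
    simp only [ContinuousLinearMap.pi_apply, Prod.smul_fst, Pi.smul_apply, smul_eq_mul]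
    exact heA j
  · rw [ContinuousLinearMap.prod_apply]
    show fderiv ℝ B p p = ((w - 1) • tractorD n u p).2
    rw [hAq p hp]
    simpa [smul_eq_mul] using heB

lemma part2 {u : Mink n → ℝ} (hu : ContDiffOn ℝ (⊤ : ℕ∞) u (upperHalf n)) {w : ℝ}
    (hhom : ∀ q ∈ upperHalf n, eulerD u q = w * u q)
    (hc : (n : ℝ) + 2 * w - 2 ≠ 0)
    {p : Mink n} (hp : p ∈ upperHalf n) (hQ : Qfun p = 0) :
    -(1 / (2 * ((n : ℝ) + 2 * w - 2))) * minkNormSq (tractorD n u p) =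
      -(((n : ℝ) + 2 * w - 2) / 2) * minkGradSq u p + w * u p * minkLap u p := by
  set c : ℝ := (n : ℝ) + 2 * w - 2 with hcdef
  set L : ℝ := minkLap u p with hL
  set a : Fin (n + 1) → ℝ := fun i => pd (eX n i) u p with ha
  set b : ℝ := pd (eT n) u p with hb
  have hQ' : (∑ i, (p.1 i) ^ 2) = p.2 ^ 2 := by
    have := hQ; rw [Qfun] at this; linarith
  have heu : (∑ i, p.1 i * a i) + p.2 * b = w * u p := by
    rw [← eulerD_eq_sum]; exact hhom p hp
  have hsum : (∑ i, ((tractorD n u p).1 i) ^ 2)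
      = c ^ 2 * (∑ i, a i ^ 2) - 2 * c * L * (∑ i, p.1 i * a i)
        + L ^ 2 * (∑ i, (p.1 i) ^ 2) := by
    have hterm : ∀ i : Fin (n + 1), ((tractorD n u p).1 i) ^ 2
        = c ^ 2 * a i ^ 2 - 2 * c * L * (p.1 i * a i) + L ^ 2 * (p.1 i) ^ 2 := by
      intro i
      rw [tractor_fst hu hhom hp i, ← hcdef, ← hL, ← show a i = pd (eX n i) u p from rfl]
      ring
    rw [Finset.sum_congr rfl (fun i _ => hterm i), Finset.sum_add_distrib,
      Finset.sum_sub_distrib, ← Finset.mul_sum, ← Finset.mul_sum, ← Finset.mul_sum]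
  have hN : minkNormSq (tractorD n u p)
      = (∑ i, ((tractorD n u p).1 i) ^ 2) - ((tractorD n u p).2) ^ 2 := rfl
  have hG : minkGradSq u p = (∑ i, a i ^ 2) - b ^ 2 := rfl
  rw [hN, hsum, tractor_snd hu hhom hp, hG, hQ']
  have hS : (∑ i, p.1 i * a i) = w * u p - p.2 * b := by linarith
  rw [hS]
  field_simp
  ring

end Helpers

theorem tractorD_homogeneous_and_length (n : ℕ) (w : ℝ)
    (u : Mink n → ℝ) (hu : ContDiffOn ℝ (⊤ : ℕ∞) u (upperHalf n))
    (hhom : ∀ p ∈ upperHalf n, eulerD u p = w * u p) :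
    (∀ p ∈ upperHalf n,
        fderiv ℝ (tractorD n u) p p = (w - 1) • tractorD n u p) ∧
    (((n : ℝ) + 2 * w - 2 ≠ 0) →
      ∀ p ∈ upperHalf n, Qfun p = 0 →
        -(1 / (2 * ((n : ℝ) + 2 * w - 2))) * minkNormSq (tractorD n u p) =
          -(((n : ℝ) + 2 * w - 2) / 2) * minkGradSq u p
            + w * u p * minkLap u p) := by
  constructor
  · intro p hp
    exact part1 hu hhom hp
  · intro hc p hp hQ
    exact part2 hu hhom hc hp hQ
end
end

section
/- For every positive integer $k$, the operator $(-\tilde\Delta)^k$ on Minkowski space is tangential on homogeneous functions of degree $-\tfrac{n-2k}{2}$: for every smooth $\tilde g$ homogeneous of degree $-\tfrac{n-2k}{2}-2$, $(-\tilde\Delta)^k(Q\tilde g)$ vanishes on the null cone $\{Q=0\}$. -/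
/-!
For every `k ≥ 1`, the operator `(-Δ̃)^k` on Minkowski space is tangential on
homogeneous functions of degree `-(n-2k)/2`: for every smooth `g̃` homogeneous
of degree `-(n-2k)/2 - 2`, `(-Δ̃)^k(Q g̃)` vanishes on the null cone `{Q = 0}`.
-/

noncomputable section

/-- `(-Δ̃)^k`. -/
def minkLapPow {n : ℕ} (k : ℕ) (f : Mink n → ℝ) : Mink n → ℝ :=
  (fun g => fun p => -(minkLap g p))^[k] f

namespace TangAux

variable {n : ℕ}

/-- coordinate CLM `x_i`. -/
def xc (n : ℕ) (i : Fin (n + 1)) : Mink n →L[ℝ] ℝ :=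
  (ContinuousLinearMap.proj i).comp (ContinuousLinearMap.fst ℝ (Fin (n + 1) → ℝ) ℝ)

/-- coordinate CLM `τ`. -/
def tc (n : ℕ) : Mink n →L[ℝ] ℝ := ContinuousLinearMap.snd ℝ (Fin (n + 1) → ℝ) ℝ

lemma xc_apply (i : Fin (n + 1)) (v : Mink n) : xc n i v = v.1 i := rfl

lemma tc_apply (v : Mink n) : tc n v = v.2 := rfl

lemma pd_contDiff {f : Mink n → ℝ} (hf : ContDiff ℝ (⊤ : ℕ∞) f) (v : Mink n) :
    ContDiff ℝ (⊤ : ℕ∞) (pd v f) :=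
  (hf.fderiv_right ((by simp))).clm_apply contDiff_const

lemma pd_differentiable {f : Mink n → ℝ} (hf : ContDiff ℝ (⊤ : ℕ∞) f) (v : Mink n) :
    Differentiable ℝ (pd v f) :=
  (pd_contDiff hf v).differentiable (by simp)

lemma hasFDerivAt_sq (i : Fin (n + 1)) (p : Mink n) :
    HasFDerivAt (fun q : Mink n => (q.1 i) ^ 2) ((2 * p.1 i) • xc n i) p := by
  have h := ((xc n i).hasFDerivAt (x := p)).fun_mul ((xc n i).hasFDerivAt (x := p))
  have e : (2 * p.1 i) • xc n i = xc n i p • xc n i + xc n i p • xc n i := by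
    rw [two_mul, add_smul]; rfl
  rw [e]
  simp only [pow_two]; exact h

lemma hasFDerivAt_sq_t (p : Mink n) :
    HasFDerivAt (fun q : Mink n => q.2 ^ 2) ((2 * p.2) • tc n) p := by
  have h := ((tc n).hasFDerivAt (x := p)).fun_mul ((tc n).hasFDerivAt (x := p))
  have e : (2 * p.2) • tc n = tc n p • tc n + tc n p • tc n := by
    rw [two_mul, add_smul]; rfl
  rw [e]
  simp only [pow_two]; exact h

lemma hasFDerivAt_Q (p : Mink n) :
    HasFDerivAt Qfun ((∑ i, (2 * p.1 i) • xc n i) - (2 * p.2) • tc n) p := by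
  have hsum : HasFDerivAt (fun q : Mink n => ∑ i, (q.1 i) ^ 2)
      (∑ i, (2 * p.1 i) • xc n i) p :=
    HasFDerivAt.fun_sum (fun i _ => hasFDerivAt_sq i p)
  exact hsum.sub (hasFDerivAt_sq_t p)

lemma contDiff_Q : ContDiff ℝ (⊤ : ℕ∞) (Qfun (n := n)) := by
  have h1 : ContDiff ℝ (⊤ : ℕ∞) (fun q : Mink n => ∑ i, (q.1 i) ^ 2) :=
    ContDiff.sum fun i _ => (xc n i).contDiff.pow 2
  exact h1.sub ((tc n).contDiff.pow 2)

lemma fderiv_Q_apply (p v : Mink n) :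
    fderiv ℝ Qfun p v = (∑ i, 2 * p.1 i * v.1 i) - 2 * p.2 * v.2 := by
  rw [(hasFDerivAt_Q p).fderiv]
  simp [xc_apply, tc_apply, mul_assoc]

lemma pd_Q_eX (i : Fin (n + 1)) (p : Mink n) :
    pd (eX n i) Qfun p = 2 * p.1 i := by
  rw [pd, fderiv_Q_apply]
  simp [eX, Pi.single_apply, mul_comm]

lemma pd_Q_eT (p : Mink n) : pd (eT n) Qfun p = -(2 * p.2) := by
  rw [pd, fderiv_Q_apply]
  simp [eT]

/-- `pd v Qfun` is (the function of) a continuous linear map. -/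
lemma pd_Q_eq_clm (v : Mink n) :
    pd v Qfun = fun q => ((∑ i, (2 * v.1 i) • xc n i) - (2 * v.2) • tc n) q := by
  funext q
  rw [pd, fderiv_Q_apply]
  simp only [ContinuousLinearMap.sub_apply, ContinuousLinearMap.sum_apply,
    ContinuousLinearMap.smul_apply, xc_apply, tc_apply, smul_eq_mul]
  congr 1
  · exact Finset.sum_congr rfl fun i _ => by ring
  · ring

lemma pd_Q_contDiff (v : Mink n) : ContDiff ℝ (⊤ : ℕ∞) (pd v Qfun) := by
  rw [pd_Q_eq_clm]
  exact ContinuousLinearMap.contDiff _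

lemma pd_pd_Q (w v : Mink n) (p : Mink n) :
    pd w (pd v Qfun) p = (∑ i, 2 * v.1 i * w.1 i) - 2 * v.2 * w.2 := by
  rw [pd, pd_Q_eq_clm v]
  rw [ContinuousLinearMap.fderiv]
  simp only [ContinuousLinearMap.sub_apply, ContinuousLinearMap.sum_apply,
    ContinuousLinearMap.smul_apply, xc_apply, tc_apply, smul_eq_mul]

lemma pd_pd_Q_eX (i : Fin (n + 1)) (p : Mink n) :
    pd (eX n i) (pd (eX n i) Qfun) p = 2 := by
  rw [pd_pd_Q]
  simp [eX, Pi.single_apply]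

lemma pd_pd_Q_eT (p : Mink n) : pd (eT n) (pd (eT n) Qfun) p = -2 := by
  rw [pd_pd_Q]
  simp [eT]

lemma euler_decomp (g : Mink n → ℝ) (p : Mink n) :
    fderiv ℝ g p p = p.2 * pd (eT n) g p + ∑ i, p.1 i * pd (eX n i) g p := by
  have hp : p = p.2 • eT n + ∑ i, p.1 i • eX n i := by
    have h1 : (p.2 • eT n + ∑ i, p.1 i • eX n i).1 = p.1 := by
      simp only [Prod.fst_add, Prod.smul_fst, Prod.fst_sum, eT, eX, smul_zero, zero_add]
      funext j
      simp [Finset.sum_apply, Pi.single_apply]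
    have h2 : (p.2 • eT n + ∑ i, p.1 i • eX n i).2 = p.2 := by
      simp [Prod.snd_add, Prod.smul_snd, Prod.snd_sum, eT, eX]
    exact Prod.ext h1.symm h2.symm
  calc fderiv ℝ g p p = fderiv ℝ g p (p.2 • eT n + ∑ i, p.1 i • eX n i) :=
        congrArg (fderiv ℝ g p) hp
    _ = p.2 * pd (eT n) g p + ∑ i, p.1 i * pd (eX n i) g p := by
        rw [map_add, map_smul, map_sum]
        simp [pd, smul_eq_mul]

lemma pd_mul {f h : Mink n → ℝ} (hf : Differentiable ℝ f) (hh : Differentiable ℝ h)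
    (v p : Mink n) :
    pd v (fun q => f q * h q) p = pd v f p * h p + f p * pd v h p := by
  simp only [pd]
  rw [fderiv_fun_mul (hf p) (hh p)]
  simp only [ContinuousLinearMap.add_apply, ContinuousLinearMap.smul_apply, smul_eq_mul]
  ring

lemma pd_add {f h : Mink n → ℝ} (hf : Differentiable ℝ f) (hh : Differentiable ℝ h)
    (v p : Mink n) :
    pd v (fun q => f q + h q) p = pd v f p + pd v h p := by
  simp only [pd]
  rw [fderiv_fun_add (hf p) (hh p)]
  simp

lemma pd_const_mul {f : Mink n → ℝ} (hf : Differentiable ℝ f) (c : ℝ) (v p : Mink n) :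
    pd v (fun q => c * f q) p = c * pd v f p := by
  simp only [pd]
  rw [fderiv_const_mul (hf p) c]
  simp

/-- Homogeneity propagates to directional derivatives. -/
lemma pd_homog {f : Mink n → ℝ} (hf : ContDiff ℝ (⊤ : ℕ∞) f) {w : ℝ}
    (hhom : ∀ p, fderiv ℝ f p p = w * f p) (v : Mink n) :
    ∀ p, fderiv ℝ (pd v f) p p = (w - 1) * pd v f p := by
  intro p
  set F : Mink n → Mink n →L[ℝ] ℝ := fun q => fderiv ℝ f q with hFdef
  have hF : ContDiff ℝ (⊤ : ℕ∞) F := hf.fderiv_right (by simp)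
  have hFd : ∀ q, HasFDerivAt F (fderiv ℝ F q) q := fun q =>
    ((hF.differentiable (by simp)) q).hasFDerivAt
  have hfd : ∀ q, HasFDerivAt f (F q) q := fun q =>
    ((hf.differentiable (by simp)) q).hasFDerivAt
  -- symmetry of second derivative
  have hsymm : ∀ a b : Mink n, fderiv ℝ F p a b = fderiv ℝ F p b a :=
    second_derivative_symmetric hfd (hFd p)
  -- derivative of q ↦ F q q
  have hG : HasFDerivAt (fun q => F q q)
      ((F p).comp (ContinuousLinearMap.id ℝ (Mink n)) + (fderiv ℝ F p).flip p) p :=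
    (hFd p).clm_apply (hasFDerivAt_id p)
  -- the function q ↦ F q q equals q ↦ w * f q
  have hGeq : (fun q => F q q) = fun q => w * f q := funext fun q => hhom q
  have hG' : HasFDerivAt (fun q => w * f q) (w • F p) p := (hfd p).const_mul w
  rw [hGeq] at hG
  have heq := hG.unique hG'
  -- apply to v
  have hv : F p v + fderiv ℝ F p v p = w * F p v := by
    have := congrArg (fun (L : Mink n →L[ℝ] ℝ) => L v) heq
    simpa [ContinuousLinearMap.add_apply, ContinuousLinearMap.flip_apply,
      smul_eq_mul] using this
  -- derivative of pd v f
  have hpd : HasFDerivAt (pd v f) ((fderiv ℝ F p).flip v) p := by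
    have h := (hFd p).clm_apply (hasFDerivAt_const v p)
    simp only [ContinuousLinearMap.comp_zero, zero_add] at h
    exact h
  rw [hpd.fderiv]
  have : fderiv ℝ F p p v = fderiv ℝ F p v p := hsymm p v
  simp only [ContinuousLinearMap.flip_apply]
  rw [this]
  have hFv : F p v = pd v f p := rfl
  rw [← hFv]
  linarith [hv]

lemma contDiff_minkLap {f : Mink n → ℝ} (hf : ContDiff ℝ (⊤ : ℕ∞) f) :
    ContDiff ℝ (⊤ : ℕ∞) (minkLap f) := by
  have h1 : ContDiff ℝ (⊤ : ℕ∞) (fun p : Mink n => -(pd (eT n) (pd (eT n) f) p)) :=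
    (pd_contDiff (pd_contDiff hf _) _).neg
  have h2 : ContDiff ℝ (⊤ : ℕ∞) (fun p : Mink n => ∑ i, pd (eX n i) (pd (eX n i) f) p) :=
    ContDiff.sum fun i _ => pd_contDiff (pd_contDiff hf _) _
  exact h1.add h2

lemma contDiff_negLap {f : Mink n → ℝ} (hf : ContDiff ℝ (⊤ : ℕ∞) f) :
    ContDiff ℝ (⊤ : ℕ∞) (fun p => -(minkLap f p)) :=
  (contDiff_minkLap hf).neg

lemma minkLap_homog {f : Mink n → ℝ} (hf : ContDiff ℝ (⊤ : ℕ∞) f) {w : ℝ}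
    (hhom : ∀ p, fderiv ℝ f p p = w * f p) :
    ∀ p, fderiv ℝ (minkLap f) p p = (w - 2) * minkLap f p := by
  intro p
  have hT : ∀ v, ∀ q, fderiv ℝ (pd v (pd v f)) q q = (w - 2) * pd v (pd v f) q := by
    intro v q
    have h1 := pd_homog hf hhom v
    have h2 := pd_homog (pd_contDiff hf v) h1 v q
    convert h2 using 2
    ring
  have hd : ∀ v, Differentiable ℝ (pd v (pd v f)) := fun v =>
    pd_differentiable (pd_contDiff hf v) v
  have hL : minkLap f = fun q =>
      -(pd (eT n) (pd (eT n) f) q) + ∑ i, pd (eX n i) (pd (eX n i) f) q := rfl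
  rw [hL]
  rw [fderiv_fun_add ((hd _ p).fun_neg) (DifferentiableAt.fun_sum fun i _ => hd _ p)]
  rw [fderiv_fun_neg, fderiv_fun_sum (fun i _ => hd _ p)]
  simp only [ContinuousLinearMap.add_apply, ContinuousLinearMap.neg_apply,
    ContinuousLinearMap.sum_apply]
  rw [hT (eT n) p]
  have : ∀ i : Fin (n + 1), fderiv ℝ (pd (eX n i) (pd (eX n i) f)) p p
      = (w - 2) * pd (eX n i) (pd (eX n i) f) p := fun i => hT (eX n i) p
  rw [Finset.sum_congr rfl fun i _ => this i]
  rw [← Finset.mul_sum]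
  ring

lemma negLap_homog {f : Mink n → ℝ} (hf : ContDiff ℝ (⊤ : ℕ∞) f) {w : ℝ}
    (hhom : ∀ p, fderiv ℝ f p p = w * f p) :
    ∀ p, fderiv ℝ (fun q => -(minkLap f q)) p p = (w - 2) * (-(minkLap f p)) := by
  intro p
  rw [fderiv_fun_neg]
  simp only [ContinuousLinearMap.neg_apply]
  rw [minkLap_homog hf hhom p]
  ring

lemma minkLap_add {f h : Mink n → ℝ} (hf : ContDiff ℝ (⊤ : ℕ∞) f) (hh : ContDiff ℝ (⊤ : ℕ∞) h)
    (p : Mink n) :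
    minkLap (fun q => f q + h q) p = minkLap f p + minkLap h p := by
  have key : ∀ v, pd v (fun q => f q + h q) = fun q => pd v f q + pd v h q :=
    fun v => funext fun q =>
      pd_add (hf.differentiable (by simp)) (hh.differentiable (by simp)) v q
  have key2 : ∀ w v q, pd w (pd v (fun q => f q + h q)) q
      = pd w (pd v f) q + pd w (pd v h) q := by
    intro w v q
    rw [key v]
    exact pd_add (pd_differentiable hf v) (pd_differentiable hh v) w q
  simp only [minkLap, key2]
  rw [Finset.sum_add_distrib]
  ring

lemma minkLap_const_mul {f : Mink n → ℝ} (hf : ContDiff ℝ (⊤ : ℕ∞) f) (c : ℝ) (p : Mink n) :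
    minkLap (fun q => c * f q) p = c * minkLap f p := by
  have key : ∀ v, pd v (fun q => c * f q) = fun q => c * pd v f q :=
    fun v => funext fun q => pd_const_mul (hf.differentiable (by simp)) c v q
  have key2 : ∀ w v q, pd w (pd v (fun q => c * f q)) q = c * pd w (pd v f) q := by
    intro w v q
    rw [key v]
    exact pd_const_mul (pd_differentiable hf v) c w q
  simp only [minkLap, key2]
  rw [← Finset.mul_sum]
  ring

/-- Key identity: `Δ(Q g) = Q Δg + 4 T g + (2n+4) g`. -/
lemma minkLap_Q_mul {g : Mink n → ℝ} (hg : ContDiff ℝ (⊤ : ℕ∞) g) (p : Mink n) :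
    minkLap (fun q => Qfun q * g q) p
      = Qfun p * minkLap g p + 4 * fderiv ℝ g p p + (2 * (n : ℝ) + 4) * g p := by
  have hgd : Differentiable ℝ g := hg.differentiable (by simp)
  have hQd : Differentiable ℝ (Qfun (n := n)) := contDiff_Q.differentiable (by simp)
  have key1 : ∀ v, pd v (fun q => Qfun q * g q)
      = fun q => pd v Qfun q * g q + Qfun q * pd v g q :=
    fun v => funext fun q => pd_mul hQd hgd v q
  have key2 : ∀ w v q, pd w (pd v (fun q' => Qfun q' * g q')) q
      = pd w (pd v Qfun) q * g q + pd v Qfun q * pd w g q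
        + pd w Qfun q * pd v g q + Qfun q * pd w (pd v g) q := by
    intro w v q
    rw [key1 v]
    have d1 : Differentiable ℝ (fun q' => pd v Qfun q' * g q') :=
      ((pd_Q_contDiff v).differentiable (by simp)).mul hgd
    have d2 : Differentiable ℝ (fun q' => Qfun q' * pd v g q') :=
      hQd.mul (pd_differentiable hg v)
    rw [pd_add d1 d2 w q]
    rw [pd_mul ((pd_Q_contDiff v).differentiable (by simp)) hgd w q]
    rw [pd_mul hQd (pd_differentiable hg v) w q]
    ring
  have hL : minkLap (fun q => Qfun q * g q) p
      = -(pd (eT n) (pd (eT n) (fun q => Qfun q * g q)) p)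
        + ∑ i, pd (eX n i) (pd (eX n i) (fun q => Qfun q * g q)) p := rfl
  rw [hL, key2 (eT n) (eT n) p]
  rw [Finset.sum_congr rfl fun i _ => key2 (eX n i) (eX n i) p]
  rw [pd_pd_Q_eT p, pd_Q_eT p]
  have hsum : ∑ i, (pd (eX n i) (pd (eX n i) Qfun) p * g p
        + pd (eX n i) Qfun p * pd (eX n i) g p
        + pd (eX n i) Qfun p * pd (eX n i) g p
        + Qfun p * pd (eX n i) (pd (eX n i) g) p)
      = ∑ i, ((2 : ℝ) * g p + 4 * (p.1 i * pd (eX n i) g p)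
        + Qfun p * pd (eX n i) (pd (eX n i) g) p) := by
    refine Finset.sum_congr rfl fun i _ => ?_
    rw [pd_pd_Q_eX i p, pd_Q_eX i p]
    ring
  rw [hsum]
  rw [euler_decomp g p]
  have hLg : minkLap g p
      = -(pd (eT n) (pd (eT n) g) p) + ∑ i, pd (eX n i) (pd (eX n i) g) p := rfl
  rw [hLg]
  simp only [Finset.sum_add_distrib, Finset.sum_const, Finset.card_univ,
    Fintype.card_fin, nsmul_eq_mul, ← Finset.mul_sum]
  push_cast
  ring

/-- One step: `(-Δ)(Q h) = Q (-Δ)h - (4 w + 2n + 4) h` for `h` homogeneous of degree `w`. -/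
lemma negLap_Q_mul {h : Mink n → ℝ} (hh : ContDiff ℝ (⊤ : ℕ∞) h) {w : ℝ}
    (hhom : ∀ p, fderiv ℝ h p p = w * h p) (p : Mink n) :
    -(minkLap (fun q => Qfun q * h q) p)
      = Qfun p * (-(minkLap h p)) - (4 * w + 2 * (n : ℝ) + 4) * h p := by
  rw [minkLap_Q_mul hh p, hhom p]
  ring

lemma minkLapPow_succ (m : ℕ) (f : Mink n → ℝ) :
    minkLapPow (m + 1) f = fun p => -(minkLap (minkLapPow m f) p) := by
  simp only [minkLapPow, Function.iterate_succ_apply']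

lemma minkLapPow_zero (f : Mink n → ℝ) : minkLapPow 0 f = f := rfl

lemma minkLapPow_contDiff {g : Mink n → ℝ} (hg : ContDiff ℝ (⊤ : ℕ∞) g) (m : ℕ) :
    ContDiff ℝ (⊤ : ℕ∞) (minkLapPow m g) := by
  induction m with
  | zero => exact hg
  | succ m ih => rw [minkLapPow_succ]; exact contDiff_negLap ih

lemma minkLapPow_homog {g : Mink n → ℝ} (hg : ContDiff ℝ (⊤ : ℕ∞) g) {w : ℝ}
    (hhom : ∀ p, fderiv ℝ g p p = w * g p) (m : ℕ) :
    ∀ p, fderiv ℝ (minkLapPow m g) p p = (w - 2 * m) * minkLapPow m g p := by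
  induction m with
  | zero => simpa [minkLapPow_zero] using hhom
  | succ m ih =>
      intro p
      rw [minkLapPow_succ]
      have h1 := negLap_homog (minkLapPow_contDiff hg m) ih p
      rw [h1]
      have h2 : (fun p : Mink n => -(minkLap (minkLapPow m g) p)) p
          = -(minkLap (minkLapPow m g) p) := rfl
      rw [h2]
      push_cast
      ring

/-- Main induction. -/
lemma main_ind {g : Mink n → ℝ} (hg : ContDiff ℝ (⊤ : ℕ∞) g) {w : ℝ}
    (hhom : ∀ p, fderiv ℝ g p p = w * g p) :
    ∀ m : ℕ, ∀ p : Mink n,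
      minkLapPow (m + 1) (fun q => Qfun q * g q) p
        = Qfun p * minkLapPow (m + 1) g p
          - ((m : ℝ) + 1) * (4 * w - 4 * m + 2 * n + 4) * minkLapPow m g p := by
  intro m
  induction m with
  | zero =>
      intro p
      rw [minkLapPow_succ 0, minkLapPow_zero]
      have hb : (fun p : Mink n => -(minkLap (fun q => Qfun q * g q) p)) p
          = -(minkLap (fun q => Qfun q * g q) p) := rfl
      rw [hb, negLap_Q_mul hg hhom p]
      have hb2 : minkLapPow (0 + 1) g p = -(minkLap g p) := by
        rw [minkLapPow_succ 0, minkLapPow_zero]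
      rw [hb2]
      have hb3 : minkLapPow 0 g p = g p := rfl
      rw [hb3]
      push_cast
      ring
  | succ m ih =>
      intro p
      have hfun : minkLapPow (m + 1) (fun q => Qfun q * g q)
          = fun q => Qfun q * minkLapPow (m + 1) g q
              + (-(((m : ℝ) + 1) * (4 * w - 4 * m + 2 * n + 4))) * minkLapPow m g q := by
        funext q
        rw [ih q]
        ring
      have hb : minkLapPow (m + 1 + 1) (fun q => Qfun q * g q) p
          = -(minkLap (minkLapPow (m + 1) (fun q => Qfun q * g q)) p) := by
        rw [minkLapPow_succ (m + 1)]
      rw [hb, hfun]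
      have hc1 : ContDiff ℝ (⊤ : ℕ∞) (fun q => Qfun q * minkLapPow (m + 1) g q) :=
        contDiff_Q.mul (minkLapPow_contDiff hg (m + 1))
      have hc2 : ContDiff ℝ (⊤ : ℕ∞) (fun q =>
          (-(((m : ℝ) + 1) * (4 * w - 4 * m + 2 * n + 4))) * minkLapPow m g q) :=
        contDiff_const.mul (minkLapPow_contDiff hg m)
      rw [minkLap_add hc1 hc2 p]
      rw [minkLap_const_mul (minkLapPow_contDiff hg m) _ p]
      have hnext : -(minkLap (minkLapPow (m + 1) g) p) = minkLapPow (m + 1 + 1) g p := by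
        rw [minkLapPow_succ (m + 1)]
      have hnext' : -(minkLap (minkLapPow m g) p) = minkLapPow (m + 1) g p := by
        rw [minkLapPow_succ m]
      have hstep := negLap_Q_mul (minkLapPow_contDiff hg (m + 1))
        (minkLapPow_homog hg hhom (m + 1)) p
      rw [hnext] at hstep
      have hA : minkLap (fun q => Qfun q * minkLapPow (m + 1) g q) p
          = -(Qfun p * minkLapPow (m + 1 + 1) g p)
            + (4 * (w - 2 * ((m + 1 : ℕ) : ℝ)) + 2 * n + 4) * minkLapPow (m + 1) g p := by
        linarith [hstep]
      have hB : minkLap (minkLapPow m g) p = -(minkLapPow (m + 1) g p) := by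
        rw [← hnext']; ring
      rw [hA, hB]
      push_cast
      ring

end TangAux

open TangAux

theorem laplacian_pow_tangential (n k : ℕ) (hk : 1 ≤ k)
    (g : Mink n → ℝ) (hg : ContDiff ℝ (⊤ : ℕ∞) g)
    (hhom : ∀ p : Mink n,
      fderiv ℝ g p p = (-(((n : ℝ) - 2 * k) / 2) - 2) * g p) :
    ∀ p : Mink n, Qfun p = 0 →
      minkLapPow k (fun q => Qfun q * g q) p = 0 := by
  obtain ⟨m, rfl⟩ : ∃ m, k = m + 1 := ⟨k - 1, (Nat.succ_pred_eq_of_pos hk).symm⟩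
  intro p hp
  rw [main_ind hg hhom m p, hp]
  have : 4 * (-(((n : ℝ) - 2 * (m + 1 : ℕ)) / 2) - 2) - 4 * m + 2 * n + 4 = 0 := by
    push_cast
    ring
  rw [this]
  ring
end
end
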